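/- arXiv:1803.06154 — 2 statements merged into one kernel-verified Lean document; each statement's English description precedes it below -/
import Mathlib

section
/- Fix real constants τ, κ, ν with δ := (κ − 4τ²)ν² − κ ≠ 0, and real constants a₁₁, a₁₂, a₂₂. Define functions b₁₁, b₂₁, b₁₂, b₂₂ : ℝ → ℝ by b₁₁(t) = 1 + 4δ⁻¹τ²a₁₁ s_δ(t) − 2δ⁻¹τ(a₁₂+τ)(c_δ(t)−1) − a₁₁δ⁻¹(δ+4τ²)t, b₂₁(t) = 2τδ⁻¹a₁₁(c_δ(t)−1) − (a₁₂+τ)s_δ(t), b₁₂(t) = δ⁻¹(2τ(2τa₁₂+δ+2τ²)s_δ(t) − 2τa₂₂(c_δ(t)−1) − (δ+4τ²)(a₁₂+τ)t), b₂₂(t) = 1 − a₂₂ s_δ(t) + δ⁻¹(2τa₁₂+δ+2τ²)(c_δ(t)−1). Then for each j ∈ {1,2}, the pair (b₁ⱼ, b₂ⱼ) solves the system b₁ⱼ'' − 2τ b₂ⱼ' = 0 and b₂ⱼ'' + 2τ b₁ⱼ' + (κ−4τ²)(1−ν²) b₂ⱼ = 0, with initial conditions b₁₁(0)=b₂₂(0)=1,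 b₁₂(0)=b₂₁(0)=0, b₁₁'(0)=−a₁₁, b₂₂'(0)=−a₂₂, b₁₂'(0)=τ−a₁₂, b₂₁'(0)=−τ−a₁₂. -/
/-! Each `b_ij` is a combination `A + B s + C c + D t`, a class closed under differentiation
(`s' = c`, `c' = δ s`). Both equations and the initial conditions thus become polynomial
identities in the coefficients, using `(κ - 4τ²)(1 - ν²) = -(δ + 4τ²)`. -/

section TrigComb

variable {δ : ℝ} {s c : ℝ → ℝ}

def trigComb (s c : ℝ → ℝ) (A B C D : ℝ) : ℝ → ℝ :=
  fun t => A + B * s t + C * c t + D * t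

theorem hasDerivAt_trigComb (hs' : ∀ t, HasDerivAt s (c t) t)
    (hc' : ∀ t, HasDerivAt c (δ * s t) t) (A B C D t : ℝ) :
    HasDerivAt (trigComb s c A B C D) (trigComb s c D (δ * C) B 0 t) t := by
  have h := (((hasDerivAt_const t A).add ((hs' t).const_mul B)).add
    ((hc' t).const_mul C)).add ((hasDerivAt_id t).const_mul D)
  exact h.congr_deriv (by simp only [trigComb]; ring)

theorem deriv_trigComb (hs' : ∀ t, HasDerivAt s (c t) t) (hc' : ∀ t, HasDerivAt c (δ * s t) t)
    (A B C D : ℝ) : deriv (trigComb s c A B C D) = trigComb s c D (δ * C) B 0 :=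
  funext fun t => (hasDerivAt_trigComb hs' hc' A B C D t).deriv

theorem trigComb_zero (hs0 : s 0 = 0) (hc0 : c 0 = 1) (A B C D : ℝ) :
    trigComb s c A B C D 0 = A + C := by
  simp [trigComb, hs0, hc0]

end TrigComb

theorem stmt_2 (τ κ ν : ℝ) (δ : ℝ) (hδdef : δ = (κ - 4 * τ ^ 2) * ν ^ 2 - κ) (hδ : δ ≠ 0)
    (a₁₁ a₁₂ a₂₂ : ℝ) (s c : ℝ → ℝ)
    (hs' : ∀ t, HasDerivAt s (c t) t) (hc' : ∀ t, HasDerivAt c (δ * s t) t)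
    (hs0 : s 0 = 0) (hc0 : c 0 = 1)
    (b₁₁ b₂₁ b₁₂ b₂₂ : ℝ → ℝ)
    (hb11 : b₁₁ = fun t => 1 + 4 * δ⁻¹ * τ ^ 2 * a₁₁ * s t
      - 2 * δ⁻¹ * τ * (a₁₂ + τ) * (c t - 1) - a₁₁ * δ⁻¹ * (δ + 4 * τ ^ 2) * t)
    (hb21 : b₂₁ = fun t => 2 * τ * δ⁻¹ * a₁₁ * (c t - 1) - (a₁₂ + τ) * s t)
    (hb12 : b₁₂ = fun t => δ⁻¹ * (2 * τ * (2 * τ * a₁₂ + δ + 2 * τ ^ 2) * s t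
      - 2 * τ * a₂₂ * (c t - 1) - (δ + 4 * τ ^ 2) * (a₁₂ + τ) * t))
    (hb22 : b₂₂ = fun t => 1 - a₂₂ * s t + δ⁻¹ * (2 * τ * a₁₂ + δ + 2 * τ ^ 2) * (c t - 1)) :
    (∀ t, deriv (deriv b₁₁) t - 2 * τ * deriv b₂₁ t = 0) ∧
    (∀ t, deriv (deriv b₂₁) t + 2 * τ * deriv b₁₁ t
      + (κ - 4 * τ ^ 2) * (1 - ν ^ 2) * b₂₁ t = 0) ∧
    (∀ t, deriv (deriv b₁₂) t - 2 * τ * deriv b₂₂ t = 0) ∧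
    (∀ t, deriv (deriv b₂₂) t + 2 * τ * deriv b₁₂ t
      + (κ - 4 * τ ^ 2) * (1 - ν ^ 2) * b₂₂ t = 0) ∧
    b₁₁ 0 = 1 ∧ b₂₂ 0 = 1 ∧ b₁₂ 0 = 0 ∧ b₂₁ 0 = 0 ∧
    deriv b₁₁ 0 = -a₁₁ ∧ deriv b₂₂ 0 = -a₂₂ ∧
    deriv b₁₂ 0 = τ - a₁₂ ∧ deriv b₂₁ 0 = -τ - a₁₂ := by
  have e11 : b₁₁ = trigComb s c (1 + 2 * δ⁻¹ * τ * (a₁₂ + τ))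
      (4 * δ⁻¹ * τ ^ 2 * a₁₁)
      (-(2 * δ⁻¹ * τ * (a₁₂ + τ))) (-(a₁₁ * δ⁻¹ * (δ + 4 * τ ^ 2))) := by
    rw [hb11]; funext t; simp only [trigComb]; ring
  have e21 : b₂₁ = trigComb s c (-(2 * τ * δ⁻¹ * a₁₁)) (-(a₁₂ + τ))
      (2 * τ * δ⁻¹ * a₁₁) 0 := by
    rw [hb21]; funext t; simp only [trigComb]; ring
  have e12 : b₁₂ = trigComb s c (2 * τ * a₂₂ * δ⁻¹)
      (δ⁻¹ * (2 * τ * (2 * τ * a₁₂ + δ + 2 * τ ^ 2)))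
      (-(2 * τ * a₂₂ * δ⁻¹)) (-(δ⁻¹ * ((δ + 4 * τ ^ 2) * (a₁₂ + τ)))) := by
    rw [hb12]; funext t; simp only [trigComb]; ring
  have e22 : b₂₂ = trigComb s c (1 - δ⁻¹ * (2 * τ * a₁₂ + δ + 2 * τ ^ 2)) (-a₂₂)
      (δ⁻¹ * (2 * τ * a₁₂ + δ + 2 * τ ^ 2)) 0 := by
    rw [hb22]; funext t; simp only [trigComb]; ring
  have hK : (κ - 4 * τ ^ 2) * (1 - ν ^ 2) = -(δ + 4 * τ ^ 2) := by rw [hδdef]; ring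
  simp only [e11, e21, e12, e22, hK, deriv_trigComb hs' hc', trigComb_zero hs0 hc0]
  simp only [trigComb]
  refine ⟨fun t => ?_, fun t => ?_, fun t => ?_, fun t => ?_,
    ?_, ?_, ?_, ?_, ?_, ?_, ?_, ?_⟩ <;> field_simp <;> ring
end

section
/- Let δ, τ be real constants with δ ≠ 0 and δ + 4τ² ≠ 0, let a₁₁, a₁₂, a₂₂ be real constants, and let h : (−ε, ε) → ℝ be smooth. Define f(r) = (d/dr)(det B(r)) + 2h(r)·det B(r), where B(r) is the 2×2 matrix with entries given by the explicit functions b_{ij} of equation (4.9) (see context). Then δ²·f(r) equals the explicit expression of equation (4.11): δ(δ²+3δτ²+4τ⁴+2τ(δ+4τ²)a₁₂+(δ−4τ²)(a₁₁a₂₂−a₁₂²))s_δ(r) − δ²(a₁₁+a₂₂)c_δ(r) − δ²(δ+4τ²)a₁₁ r s_δ(r) + δ(δ+4τ²)(a₁₁a₂₂−(τ+a₁₂)²) r c_δ(r) − 2δ(δ+4τ²)((τ+a₁₂)²−a₁₁a₂₂) r h(r) s_δ(r) − 2δ(δ+4τ²)a₁₁ r h(r) c_δ(r) − 2δ(δa₂₂−4τ²a₁₁)h(r)s_δ(r)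 + 2((δ+4τ²)(δ+4τa₁₂)−8τ²(a₁₁a₂₂−a₁₂²−τ²))h(r)c_δ(r) + 8τ(2τa₁₁a₂₂−(τ+a₁₂)(δ+2τ²+2τa₁₂))h(r). -/
theorem stmt_16 (δ τ a₁₁ a₁₂ a₂₂ : ℝ) (hδ : δ ≠ 0) (hδτ : δ + 4 * τ ^ 2 ≠ 0)
    (s c : ℝ → ℝ)
    (hs' : ∀ t, HasDerivAt s (c t) t) (hc' : ∀ t, HasDerivAt c (δ * s t) t)
    (hs0 : s 0 = 0) (hc0 : c 0 = 1)
    (h : ℝ → ℝ) (hsm : ContDiff ℝ (⊤ : ℕ∞) h)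
    (b₁₁ b₂₁ b₁₂ b₂₂ : ℝ → ℝ)
    (hb11 : b₁₁ = fun t => 1 + 4 * δ⁻¹ * τ ^ 2 * a₁₁ * s t
      - 2 * δ⁻¹ * τ * (a₁₂ + τ) * (c t - 1) - a₁₁ * δ⁻¹ * (δ + 4 * τ ^ 2) * t)
    (hb21 : b₂₁ = fun t => 2 * τ * δ⁻¹ * a₁₁ * (c t - 1) - (a₁₂ + τ) * s t)
    (hb12 : b₁₂ = fun t => δ⁻¹ * (2 * τ * (2 * τ * a₁₂ + δ + 2 * τ ^ 2) * s t
      - 2 * τ * a₂₂ * (c t - 1) - (δ + 4 * τ ^ 2) * (a₁₂ + τ) * t))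
    (hb22 : b₂₂ = fun t => 1 - a₂₂ * s t + δ⁻¹ * (2 * τ * a₁₂ + δ + 2 * τ ^ 2) * (c t - 1))
    (detB f : ℝ → ℝ)
    (hdet : detB = fun r => b₁₁ r * b₂₂ r - b₁₂ r * b₂₁ r)
    (hf : f = fun r => deriv detB r + 2 * h r * detB r) :
    ∀ r : ℝ, δ ^ 2 * f r =
      δ * (δ ^ 2 + 3 * δ * τ ^ 2 + 4 * τ ^ 4 + 2 * τ * (δ + 4 * τ ^ 2) * a₁₂
        + (δ - 4 * τ ^ 2) * (a₁₁ * a₂₂ - a₁₂ ^ 2)) * s r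
      - δ ^ 2 * (a₁₁ + a₂₂) * c r
      - δ ^ 2 * (δ + 4 * τ ^ 2) * a₁₁ * r * s r
      + δ * (δ + 4 * τ ^ 2) * (a₁₁ * a₂₂ - (τ + a₁₂) ^ 2) * r * c r
      - 2 * δ * (δ + 4 * τ ^ 2) * ((τ + a₁₂) ^ 2 - a₁₁ * a₂₂) * r * h r * s r
      - 2 * δ * (δ + 4 * τ ^ 2) * a₁₁ * r * h r * c r
      - 2 * δ * (δ * a₂₂ - 4 * τ ^ 2 * a₁₁) * h r * s r
      + 2 * ((δ + 4 * τ ^ 2) * (δ + 4 * τ * a₁₂)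
        - 8 * τ ^ 2 * (a₁₁ * a₂₂ - a₁₂ ^ 2 - τ ^ 2)) * h r * c r
      + 8 * τ * (2 * τ * a₁₁ * a₂₂ - (τ + a₁₂) * (δ + 2 * τ ^ 2 + 2 * τ * a₁₂)) * h r := by
  -- Pythagorean-type invariant
  have key : ∀ t, c t ^ 2 - δ * s t ^ 2 = 1 := by
    have hdiff : Differentiable ℝ (fun y => c y ^ 2 - δ * s y ^ 2) := by
      intro x
      exact (((hc' x).pow 2).sub (((hs' x).pow 2).const_mul δ)).differentiableAt
    have hder0 : ∀ x, deriv (fun y => c y ^ 2 - δ * s y ^ 2) x = 0 := by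
      intro x
      have hx : HasDerivAt (fun y => c y ^ 2 - δ * s y ^ 2) 0 x := by
        have := ((hc' x).pow 2).sub (((hs' x).pow 2).const_mul δ)
        exact this.congr_deriv (by norm_num; ring)
      exact hx.deriv
    intro t
    have := is_const_of_deriv_eq_zero hdiff hder0 t 0
    simpa [hs0, hc0] using this
  intro r
  have H11 : HasDerivAt b₁₁
      (4 * δ⁻¹ * τ ^ 2 * a₁₁ * c r - 2 * δ⁻¹ * τ * (a₁₂ + τ) * (δ * s r)
        - a₁₁ * δ⁻¹ * (δ + 4 * τ ^ 2)) r := by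
    rw [hb11]
    have := (((hasDerivAt_const r (1 : ℝ)).add ((hs' r).const_mul (4 * δ⁻¹ * τ ^ 2 * a₁₁))).sub
      (((hc' r).sub_const 1).const_mul (2 * δ⁻¹ * τ * (a₁₂ + τ)))).sub
      ((hasDerivAt_id r).const_mul (a₁₁ * δ⁻¹ * (δ + 4 * τ ^ 2)))
    exact this.congr_deriv (by ring)
  have H21 : HasDerivAt b₂₁
      (2 * τ * δ⁻¹ * a₁₁ * (δ * s r) - (a₁₂ + τ) * c r) r := by
    rw [hb21]
    exact (((hc' r).sub_const 1).const_mul (2 * τ * δ⁻¹ * a₁₁)).sub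
      ((hs' r).const_mul (a₁₂ + τ))
  have H12 : HasDerivAt b₁₂
      (δ⁻¹ * (2 * τ * (2 * τ * a₁₂ + δ + 2 * τ ^ 2) * c r
        - 2 * τ * a₂₂ * (δ * s r) - (δ + 4 * τ ^ 2) * (a₁₂ + τ))) r := by
    rw [hb12]
    have := ((((hs' r).const_mul (2 * τ * (2 * τ * a₁₂ + δ + 2 * τ ^ 2))).sub
      (((hc' r).sub_const 1).const_mul (2 * τ * a₂₂))).sub
      ((hasDerivAt_id r).const_mul ((δ + 4 * τ ^ 2) * (a₁₂ + τ)))).const_mul δ⁻¹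
    exact this.congr_deriv (by ring)
  have H22 : HasDerivAt b₂₂
      (-(a₂₂ * c r) + δ⁻¹ * (2 * τ * a₁₂ + δ + 2 * τ ^ 2) * (δ * s r)) r := by
    rw [hb22]
    have := (((hasDerivAt_const r (1 : ℝ)).sub ((hs' r).const_mul a₂₂)).add
      (((hc' r).sub_const 1).const_mul (δ⁻¹ * (2 * τ * a₁₂ + δ + 2 * τ ^ 2))))
    exact this.congr_deriv (by ring)
  have Hdet : HasDerivAt detB
      ((4 * δ⁻¹ * τ ^ 2 * a₁₁ * c r - 2 * δ⁻¹ * τ * (a₁₂ + τ) * (δ * s r)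
          - a₁₁ * δ⁻¹ * (δ + 4 * τ ^ 2)) * b₂₂ r
        + b₁₁ r * (-(a₂₂ * c r) + δ⁻¹ * (2 * τ * a₁₂ + δ + 2 * τ ^ 2) * (δ * s r))
        - ((δ⁻¹ * (2 * τ * (2 * τ * a₁₂ + δ + 2 * τ ^ 2) * c r
          - 2 * τ * a₂₂ * (δ * s r) - (δ + 4 * τ ^ 2) * (a₁₂ + τ))) * b₂₁ r
          + b₁₂ r * (2 * τ * δ⁻¹ * a₁₁ * (δ * s r) - (a₁₂ + τ) * c r))) r := by
    rw [hdet]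
    exact (H11.mul H22).sub (H12.mul H21)
  have hk := key r
  rw [hf]
  simp only
  rw [Hdet.deriv, hdet]
  simp only [hb11, hb12, hb21, hb22]
  field_simp
  linear_combination (-4 * τ * h r * (δ * τ + δ * a₁₂ + 2 * τ ^ 3 + 4 * τ ^ 2 * a₁₂
    - 2 * τ * a₁₁ * a₂₂ + 2 * τ * a₁₂ ^ 2)) * hk
end
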